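/- Let $\{\phi_t\}_{t=1}^\infty$ be a sequence in $\mathbb{R}^d$, let $\Lambda_0 \in \mathbb{R}^{d\times d}$ be positive definite, and set $\Lambda_t = \Lambda_0 + \sum_{j=1}^{t-1}\phi_j\phi_j^\top$. Then for any $t \ge 1$, $\sum_{j=1}^t \min\{1, \phi_j^\top \Lambda_j^{-1}\phi_j\} \le 2\log\left(\det(\Lambda_{t+1})/\det(\Lambda_1)\right)$. -/

import Mathlib

/-!
Each rank-one update multiplies the determinant by `1 + φᵀ Λ⁻¹ φ` (matrix determinant lemma), so
`log det` grows by `log (1 + φᵀ Λ⁻¹ φ)` at each step and the right-hand side telescopes into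
`2 ∑ log (1 + φⱼᵀ Λⱼ⁻¹ φⱼ)`. Termwise, `min 1 x ≤ 2 log (1 + x)` for `x ≥ 0`.
-/

open Matrix

theorem min_one_le_two_mul_log_one_add {x : ℝ} (hx : 0 ≤ x) :
    min 1 x ≤ 2 * Real.log (1 + x) := by
  refine le_trans ?_ (mul_le_mul_of_nonneg_left (Real.le_log_one_add_of_nonneg hx) zero_le_two)
  rw [← mul_div_assoc, le_div_iff₀ (by positivity)]
  rcases le_total x 1 with hx1 | hx1
  · rw [min_eq_right hx1]; nlinarith
  · rw [min_eq_left hx1]; linarith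

namespace Matrix

variable {m : Type*} [Fintype m]

theorem det_add_vecMulVec [DecidableEq m] {α : Type*} [CommRing α] {A : Matrix m m α}
    (hA : IsUnit A.det) (u v : m → α) :
    (A + vecMulVec u v).det = A.det * (1 + v ⬝ᵥ (A⁻¹ *ᵥ u)) := by
  rw [vecMulVec_eq Unit, det_add_replicateCol_mul_replicateRow hA, Matrix.mul_assoc,
    ← replicateCol_mulVec, det_one_add_mul_comm, det_one_add_replicateCol_mul_replicateRow]

theorem PosDef.add_vecMulVec_self {A : Matrix m m ℝ} (hA : A.PosDef) (u : m → ℝ) :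
    (A + vecMulVec u u).PosDef := by
  simpa using hA.add_posSemidef (posSemidef_vecMulVec_self_star u)

theorem PosDef.dotProduct_inv_mulVec_self_nonneg [DecidableEq m] {A : Matrix m m ℝ}
    (hA : A.PosDef) (u : m → ℝ) : 0 ≤ u ⬝ᵥ (A⁻¹ *ᵥ u) := by
  simpa using hA.inv.posSemidef.dotProduct_mulVec_nonneg u

theorem PosDef.log_det_add_vecMulVec_self [DecidableEq m] {A : Matrix m m ℝ} (hA : A.PosDef)
    (u : m → ℝ) :
    Real.log (A + vecMulVec u u).det = Real.log A.det + Real.log (1 + u ⬝ᵥ (A⁻¹ *ᵥ u)) := by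
  have hq := hA.dotProduct_inv_mulVec_self_nonneg u
  rw [det_add_vecMulVec hA.det_pos.ne'.isUnit, Real.log_mul hA.det_pos.ne' (by positivity)]

end Matrix

section RankOneUpdates

variable {m : Type*} [Fintype m] {Λ : ℕ → Matrix m m ℝ} {φ : ℕ → m → ℝ} {a : ℕ}

theorem posDef_of_add_vecMulVec_self (hΛa : (Λ a).PosDef)
    (hstep : ∀ j, a ≤ j → Λ (j + 1) = Λ j + vecMulVec (φ j) (φ j)) :
    ∀ j, a ≤ j → (Λ j).PosDef := by
  intro j hj
  induction j, hj using Nat.le_induction with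
  | base => exact hΛa
  | succ j hj ih => rw [hstep j hj]; exact ih.add_vecMulVec_self _

theorem sum_min_one_le_two_mul_log_det_div [DecidableEq m] {b : ℕ} (hab : a ≤ b)
    (hΛa : (Λ a).PosDef) (hstep : ∀ j, a ≤ j → Λ (j + 1) = Λ j + vecMulVec (φ j) (φ j)) :
    ∑ j ∈ Finset.Icc a b, min 1 (φ j ⬝ᵥ ((Λ j)⁻¹ *ᵥ φ j))
      ≤ 2 * Real.log ((Λ (b + 1)).det / (Λ a).det) := by
  have hpos := posDef_of_add_vecMulVec_self hΛa hstep
  have hterm : ∀ j ∈ Finset.Icc a b, min 1 (φ j ⬝ᵥ ((Λ j)⁻¹ *ᵥ φ j))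
      ≤ 2 * (Real.log (Λ (j + 1)).det - Real.log (Λ j).det) := by
    intro j hj
    have haj := (Finset.mem_Icc.1 hj).1
    rw [hstep j haj, (hpos j haj).log_det_add_vecMulVec_self, add_sub_cancel_left]
    exact min_one_le_two_mul_log_one_add ((hpos j haj).dotProduct_inv_mulVec_self_nonneg _)
  calc ∑ j ∈ Finset.Icc a b, min 1 (φ j ⬝ᵥ ((Λ j)⁻¹ *ᵥ φ j))
      ≤ ∑ j ∈ Finset.Icc a b, 2 * (Real.log (Λ (j + 1)).det - Real.log (Λ j).det) :=
        Finset.sum_le_sum hterm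
    _ = 2 * (Real.log (Λ (b + 1)).det - Real.log (Λ a).det) := by
        rw [← Finset.mul_sum, Finset.sum_Icc_sub hab fun j => Real.log (Λ j).det]
    _ = 2 * Real.log ((Λ (b + 1)).det / (Λ a).det) := by
        rw [Real.log_div (hpos _ (by omega)).det_pos.ne' (hpos a le_rfl).det_pos.ne']

end RankOneUpdates

/-- Elliptical potential lemma. -/
theorem stmt1 {d : ℕ} (φ : ℕ → Fin d → ℝ) (Λ₀ : Matrix (Fin d) (Fin d) ℝ)
    (hΛ₀ : Λ₀.PosDef)
    (Λ : ℕ → Matrix (Fin d) (Fin d) ℝ)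
    (hΛ : ∀ t, Λ t = Λ₀ + ∑ j ∈ Finset.Ico 1 t, vecMulVec (φ j) (φ j)) :
    ∀ t : ℕ, 1 ≤ t →
      ∑ j ∈ Finset.Icc 1 t, min 1 (φ j ⬝ᵥ ((Λ j)⁻¹ *ᵥ φ j))
        ≤ 2 * Real.log ((Λ (t + 1)).det / (Λ 1).det) := by
  intro t ht
  have hΛ₁ : (Λ 1).PosDef := by simpa [hΛ 1] using hΛ₀
  have hstep : ∀ j, 1 ≤ j → Λ (j + 1) = Λ j + vecMulVec (φ j) (φ j) := fun j hj => by
    rw [hΛ, hΛ, Finset.sum_Ico_succ_top hj, add_assoc]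
  exact sum_min_one_le_two_mul_log_det_div ht hΛ₁ hstep
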